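/- arXiv:2605.25907 — 2 statements merged into one kernel-verified Lean document; each statement's English description precedes it below -/
import Mathlib

section
/- Assume the Cycle Setup. Then A contains no two integers that are consecutive modulo n−4 (i.e., there is no s with both s and s+1 in A, indices modulo n−4), and likewise B contains no two integers that are consecutive modulo n−4. -/
set_option autoImplicit false

/-- `IsRainbowPathOn G D S k x y`: in the graph collection `G` (with relevant
indices `D`), there is a rainbow path on `k` vertices from `x` to `y`, all of
whose vertices lie in `S`: the vertices are `u 0, u 1, …, u (k-1)`, pairwise
distinct, and the edges get pairwise distinct colors `c 0, …, c (k-2)` from `D`,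
the `i`-th edge lying in the graph `G (c i)`. -/
def IsRainbowPathOn {V : Type*} (G : ℕ → SimpleGraph V) (D : Finset ℕ)
    (S : Set V) (k : ℕ) (x y : V) : Prop :=
  ∃ (u : ℕ → V) (c : ℕ → ℕ),
    (∀ i, i < k → u i ∈ S) ∧
    (∀ i j, i < k → j < k → u i = u j → i = j) ∧
    (∀ i, i + 1 < k → c i ∈ D) ∧
    (∀ i j, i + 1 < k → j + 1 < k → c i = c j → i = j) ∧
    0 < k ∧ u 0 = x ∧ u (k - 1) = y ∧
    (∀ i, i + 1 < k → (G (c i)).Adj (u i) (u (i + 1)))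

/-- The number of edges of a shortest rainbow path between `x` and `y`. -/
noncomputable def rainbowDist {V : Type*} (G : ℕ → SimpleGraph V) (D : Finset ℕ)
    (x y : V) : ℕ :=
  sInf {d : ℕ | IsRainbowPathOn G D Set.univ (d + 1) x y}

/-- The collection `G` (indices `D`) on the finite vertex type `V` is rainbow
panconnected: for every pair of distinct vertices `x, y` and every
`k` with `rainbowDist x y + 1 ≤ k ≤ |V|` there is a rainbow `k`-path
joining `x` and `y`. -/
def RainbowPanconnected {V : Type*} [Fintype V] (G : ℕ → SimpleGraph V)
    (D : Finset ℕ) : Prop :=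
  ∀ x y : V, x ≠ y → ∀ k : ℕ,
    rainbowDist G D x y + 1 ≤ k → k ≤ Fintype.card V →
    IsRainbowPathOn G D Set.univ k x y

/-- `IsFCollection n m G`: the graphs `G 1, …, G m` (on an `n`-vertex set, `n` odd)
all equal `Q₁ ∨ Q₂` where `Q₁` is an empty graph on `(n-1)/2` vertices and `Q₂` is a
graph on the remaining `(n+1)/2` vertices with minimum degree at least `1` having
a connected component which is a single edge. -/
def IsFCollection {V : Type*} (n m : ℕ) (G : ℕ → SimpleGraph V) : Prop :=
  ∃ (S : Set V) (G0 : SimpleGraph V),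
    2 * S.ncard = n - 1 ∧ 2 * Sᶜ.ncard = n + 1 ∧
    (∀ i ∈ Finset.Icc 1 m, G i = G0) ∧
    (∀ a ∈ S, ∀ b ∈ S, ¬ G0.Adj a b) ∧
    (∀ a ∈ S, ∀ b ∈ Sᶜ, G0.Adj a b) ∧
    (∀ a ∈ Sᶜ, ∃ b ∈ Sᶜ, G0.Adj a b) ∧
    (∃ a ∈ Sᶜ, ∃ b ∈ Sᶜ, G0.Adj a b ∧
      (∀ v ∈ Sᶜ, G0.Adj a v → v = b) ∧ (∀ v ∈ Sᶜ, G0.Adj b v → v = a))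

/-- A rainbow cycle on `l` vertices, all lying in `S`, in the collection `G`
with color set `D`. -/
def HasRainbowCycleOn {V : Type*} (G : ℕ → SimpleGraph V) (D : Finset ℕ)
    (S : Set V) (l : ℕ) : Prop :=
  ∃ (u : ℕ → V) (c : ℕ → ℕ),
    (∀ i, i < l → u i ∈ S) ∧
    (∀ i j, i < l → j < l → u i = u j → i = j) ∧
    (∀ i, i < l → c i ∈ D) ∧
    (∀ i j, i < l → j < l → c i = c j → i = j) ∧
    3 ≤ l ∧
    (∀ i, i < l → (G (c i)).Adj (u i) (u ((i + 1) % l)))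

/-- A rainbow Hamiltonian cycle on the set `S` (of `l` vertices) in the
collection `G` with color set `D`: a rainbow cycle passing through every
vertex of `S`. -/
def HasRainbowHamCycleOn {V : Type*} (G : ℕ → SimpleGraph V) (D : Finset ℕ)
    (S : Set V) (l : ℕ) : Prop :=
  ∃ (u : ℕ → V) (c : ℕ → ℕ),
    (∀ i j, i < l → j < l → u i = u j → i = j) ∧
    (∀ v : V, v ∈ S ↔ ∃ i, i < l ∧ u i = v) ∧
    (∀ i, i < l → c i ∈ D) ∧
    (∀ i j, i < l → j < l → c i = c j → i = j) ∧
    3 ≤ l ∧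
    (∀ i, i < l → (G (c i)).Adj (u i) (u ((i + 1) % l)))

/-- A rainbow Hamiltonian path on the set `S` (of `l` vertices) in the
collection `G` with color set `D`: a rainbow path passing through every
vertex of `S`. -/
def HasRainbowHamPathOn {V : Type*} (G : ℕ → SimpleGraph V) (D : Finset ℕ)
    (S : Set V) (l : ℕ) : Prop :=
  ∃ (u : ℕ → V) (c : ℕ → ℕ),
    (∀ i j, i < l → j < l → u i = u j → i = j) ∧
    (∀ v : V, v ∈ S ↔ ∃ i, i < l ∧ u i = v) ∧
    (∀ i, i + 1 < l → c i ∈ D) ∧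
    (∀ i j, i + 1 < l → j + 1 < l → c i = c j → i = j) ∧
    0 < l ∧
    (∀ i, i + 1 < l → (G (c i)).Adj (u i) (u (i + 1)))

set_option linter.unusedVariables false
set_option maxHeartbeats 1000000

private lemma uperiod {V : Type*} (u : ℕ → V) (m : ℕ) (hm : 0 < m)
    (hper : ∀ i, u (i + m) = u i) :
    ∀ a b : ℕ, a % m = b % m → u a = u b := by
  have key : ∀ a : ℕ, u a = u (a % m) := by
    intro a
    induction a using Nat.strong_induction_on with
    | _ a ih =>
      rcases lt_or_ge a m with h | h
      · rw [Nat.mod_eq_of_lt h]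
      · have h1 : a - m + m = a := by omega
        have h2 := hper (a - m)
        rw [h1] at h2
        have h3 : (a - m) % m = a % m := by
          conv_rhs => rw [← h1]
          rw [Nat.add_mod_right]
        rw [h2, ih (a - m) (by omega), h3]
  intro a b h
  rw [key a, key b, h]

private lemma dc_range {D : Finset ℕ} {m k : ℕ} (hD : D ⊆ Finset.range m)
    (hcard : D.card = k) (hdc : ∀ j, j + 1 ∈ D → j ∈ D) :
    ∀ j, j ∈ D ↔ j < k := by
  have down : ∀ d j, j ∈ D → j - d ∈ D := by
    intro d
    induction d with
    | zero => intro j hj; simpa using hj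
    | succ d ih =>
      intro j hj
      rcases Nat.eq_zero_or_pos (j - d) with h | h
      · have h0 : j - (d + 1) = 0 := by omega
        rw [h0]
        have hh := ih j hj
        rwa [h] at hh
      · have h2 : j - (d + 1) + 1 = j - d := by omega
        apply hdc
        rw [h2]
        exact ih j hj
  intro j
  constructor
  · intro hj
    by_contra h
    push_neg at h
    have hsub : Finset.range (j + 1) ⊆ D := by
      intro i hi
      rw [Finset.mem_range] at hi
      have : j - (j - i) = i := by omega
      have := down (j - i) j hj
      rwa [‹j - (j - i) = i›] at this
    have := Finset.card_le_card hsub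
    rw [Finset.card_range, hcard] at this
    omega
  · intro hj
    by_contra h
    have hsub : D ⊆ Finset.range j := by
      intro i hi
      rw [Finset.mem_range]
      by_contra h2
      push_neg at h2
      have h3 : i - (i - j) = j := by omega
      have := down (i - j) i hi
      rw [h3] at this
      exact h this
    have := Finset.card_le_card hsub
    rw [Finset.card_range, hcard] at this
    omega

private lemma cover {V : Type*} [Fintype V] [DecidableEq V] {n : ℕ} (hV : Fintype.card V = n)
    {x y z : V} (hxy : x ≠ y) (hzx : z ≠ x) (hzy : z ≠ y)
    (f : ℕ → V) (l : ℕ) (hl : l + 3 = n)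
    (hinj : ∀ i j, i < l → j < l → f i = f j → i = j)
    (hmem : ∀ i, i < l → f i ≠ x ∧ f i ≠ y ∧ f i ≠ z) :
    ∀ t : V, t ≠ x → t ≠ y → t ≠ z → ∃ i, i < l ∧ f i = t := by
  set T : Finset V := (Finset.range l).image f with hT
  have hTcard : T.card = l := by
    rw [hT, Finset.card_image_of_injOn, Finset.card_range]
    intro a ha b hb hab
    exact hinj a b (Finset.mem_range.mp ha) (Finset.mem_range.mp hb) hab
  have hxyz : ({x, y, z} : Finset V).card = 3 := by
    rw [Finset.card_insert_of_notMem (by simp [hxy, hzx.symm]),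
      Finset.card_insert_of_notMem (by simp [hzy.symm]), Finset.card_singleton]
  have hsub : T ⊆ Finset.univ \ {x, y, z} := by
    intro t ht
    rw [hT, Finset.mem_image] at ht
    obtain ⟨i, hi, rfl⟩ := ht
    have h := hmem i (Finset.mem_range.mp hi)
    simp only [Finset.mem_sdiff, Finset.mem_univ, true_and, Finset.mem_insert,
      Finset.mem_singleton]
    tauto
  have hcard2 : (Finset.univ \ ({x, y, z} : Finset V)).card = l := by
    rw [Finset.card_sdiff_of_subset (Finset.subset_univ _), Finset.card_univ, hV, hxyz]
    omega
  have hEq : T = Finset.univ \ {x, y, z} :=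
    Finset.eq_of_subset_of_card_le hsub (by rw [hcard2, hTcard])
  intro t htx hty htz
  have ht : t ∈ T := by
    rw [hEq]
    simp only [Finset.mem_sdiff, Finset.mem_univ, true_and, Finset.mem_insert,
      Finset.mem_singleton]
    tauto
  rw [hT, Finset.mem_image] at ht
  obtain ⟨i, hi, hfi⟩ := ht
  exact ⟨i, Finset.mem_range.mp hi, hfi⟩

private lemma zmod_gen {m : ℕ} [NeZero m] (hm : 3 ≤ m) (hmo : Odd m) (Q : Finset (ZMod m))
    (hstep : ∀ a ∈ Q, a + 2 ∈ Q) (hne : Q.Nonempty) : Q = Finset.univ := by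
  obtain ⟨q, hq⟩ := hne
  have horb : ∀ c : ℕ, q + 2 * (c : ZMod m) ∈ Q := by
    intro c
    induction c with
    | zero => simpa using hq
    | succ c ih =>
      have h2 := hstep _ ih
      have h3 : q + 2 * ((c + 1 : ℕ) : ZMod m) = q + 2 * (c : ℕ) + 2 := by
        push_cast; ring
      rw [h3]; exact h2
  have hu2 : IsUnit (2 : ZMod m) := by
    have hc : Nat.Coprime 2 m := Nat.coprime_two_left.mpr hmo
    have := (ZMod.isUnit_iff_coprime 2 m).mpr hc
    simpa using this
  apply Finset.eq_univ_of_forall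
  intro t
  set j : ℕ := ((t - q) * (2 : ZMod m)⁻¹).val with hj
  have hv : ((j : ℕ) : ZMod m) = (t - q) * (2 : ZMod m)⁻¹ := ZMod.natCast_rightInverse _
  have hkey : q + 2 * ((j : ℕ) : ZMod m) = t := by
    rw [hv]
    have h2 : (2 : ZMod m) * ((t - q) * (2 : ZMod m)⁻¹) = t - q := by
      rw [mul_comm (t - q), ← mul_assoc, ZMod.mul_inv_of_unit _ hu2, one_mul]
    rw [h2]; ring
  rw [← hkey]
  exact horb j


private lemma no_consec {m : ℕ} [NeZero m] (hm : 3 ≤ m) (hmo : Odd m)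
    (P Q : Finset (ZMod m))
    (hP : (m - 1) / 2 ≤ P.card) (hQ : (m - 1) / 2 ≤ Q.card)
    (h1 : ∀ t : ZMod m, ¬(t ∈ P ∧ t + 1 ∈ Q))
    (h2 : ∀ t : ZMod m, ¬(t ∈ Q ∧ t + 1 ∈ P)) :
    ∀ t ∈ Q, t + 1 ∉ Q := by
  classical
  obtain ⟨k0, hk0⟩ := hmo
  set k := (m - 1) / 2 with hk
  have hkm : m = 2 * k + 1 := by omega
  have hcardU : Fintype.card (ZMod m) = m := ZMod.card m
  have hu2 : IsUnit (2 : ZMod m) := by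
    have hc : Nat.Coprime 2 m := Nat.coprime_two_left.mpr ⟨k0, hk0⟩
    simpa using (ZMod.isUnit_iff_coprime 2 m).mpr hc
  set Qp : Finset (ZMod m) := Q.image (· + 1) with hQp
  set Qm : Finset (ZMod m) := Q.image (· - 1) with hQm
  have hQpcard : Qp.card = Q.card := Finset.card_image_of_injective _ (add_left_injective 1)
  have hQmcard : Qm.card = Q.card := Finset.card_image_of_injective _ (sub_left_injective)
  have hmemQp : ∀ t : ZMod m, t ∈ Qp ↔ t - 1 ∈ Q := by
    intro t
    rw [hQp, Finset.mem_image]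
    constructor
    · rintro ⟨a, ha, rfl⟩; simpa using ha
    · intro h; exact ⟨t - 1, h, by ring⟩
  have hmemQm : ∀ t : ZMod m, t ∈ Qm ↔ t + 1 ∈ Q := by
    intro t
    rw [hQm, Finset.mem_image]
    constructor
    · rintro ⟨a, ha, rfl⟩; simpa using ha
    · intro h; exact ⟨t + 1, h, by ring⟩
  have hdisj : Disjoint P (Qp ∪ Qm) := by
    rw [Finset.disjoint_left]
    intro t htP htU
    rcases Finset.mem_union.mp htU with h | h
    · exact h2 (t - 1) ⟨(hmemQp t).mp h, by simpa using htP⟩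
    · exact h1 t ⟨htP, (hmemQm t).mp h⟩
  have hPne : P.Nonempty := Finset.card_pos.mp (by omega)
  have hQne : Q.Nonempty := Finset.card_pos.mp (by omega)
  have hQpQm : Qp ≠ Qm := by
    intro hEq
    have hstep : ∀ a ∈ Q, a + 2 ∈ Q := by
      intro a ha
      have h1' : a + 1 ∈ Qp := (hmemQp _).mpr (by simpa using ha)
      have h2' : a + 1 ∈ Qm := hEq ▸ h1'
      have h3' := (hmemQm _).mp h2'
      convert h3' using 1; ring
    have hQuniv := zmod_gen hm ⟨k0, hk0⟩ Q hstep hQne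
    obtain ⟨p, hp⟩ := hPne
    exact h2 (p - 1) ⟨by rw [hQuniv]; exact Finset.mem_univ _, by simpa using hp⟩
  have hUnion_le : P.card + (Qp ∪ Qm).card ≤ m := by
    have h := Finset.card_le_univ (P ∪ (Qp ∪ Qm))
    rw [Finset.card_union_of_disjoint hdisj, hcardU] at h
    exact h
  have hUnion_ge : Q.card + 1 ≤ (Qp ∪ Qm).card := by
    by_contra h
    push_neg at h
    have hsub : Qp ⊆ Qp ∪ Qm := Finset.subset_union_left
    have hEq : Qp = Qp ∪ Qm := Finset.eq_of_subset_of_card_le hsub (by omega)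
    have hQmsub : Qm ⊆ Qp := hEq ▸ Finset.subset_union_right
    exact hQpQm (Finset.eq_of_subset_of_card_le hQmsub (by omega)).symm
  have hQcard : Q.card = k := by omega
  have hsd_card : (Qm \ Qp).card = 1 := by
    have hx : (Qm \ Qp).card + Qp.card = (Qm ∪ Qp).card := Finset.card_sdiff_add_card Qm Qp
    have hy : (Qm ∪ Qp) = (Qp ∪ Qm) := Finset.union_comm _ _
    rw [hy] at hx
    have h2' : Qm \ Qp ≠ ∅ := by
      intro hEq
      have hsub : Qm ⊆ Qp := by
        intro t ht
        by_contra h3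
        have h4 : t ∈ Qm \ Qp := Finset.mem_sdiff.mpr ⟨ht, h3⟩
        rw [hEq] at h4
        simp at h4
      exact hQpQm (Finset.eq_of_subset_of_card_le hsub (by omega)).symm
    have := Finset.card_pos.mpr (Finset.nonempty_iff_ne_empty.mpr h2')
    omega
  obtain ⟨t₀, ht₀⟩ := Finset.card_eq_one.mp hsd_card
  have ht₀mem : t₀ ∈ Qm \ Qp := ht₀ ▸ Finset.mem_singleton_self t₀
  set e : ZMod m := t₀ + 1 with he
  have heQ : e ∈ Q := (hmemQm t₀).mp (Finset.mem_sdiff.mp ht₀mem).1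
  have heE : e - 2 ∉ Q := by
    have hxx : e - 2 = t₀ - 1 := by rw [he]; ring
    rw [hxx]
    intro hc
    exact (Finset.mem_sdiff.mp ht₀mem).2 ((hmemQp t₀).mpr hc)
  have huniq : ∀ e' ∈ Q, e' - 2 ∉ Q → e' = e := by
    intro e' h1' h2'
    have hmm : e' - 1 ∈ Qm \ Qp := by
      refine Finset.mem_sdiff.mpr ⟨(hmemQm _).mpr (by simpa using h1'), fun hc => ?_⟩
      have := (hmemQp _).mp hc
      have hxx : e' - 1 - 1 = e' - 2 := by ring
      rw [hxx] at this
      exact h2' this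
    rw [ht₀, Finset.mem_singleton] at hmm
    rw [he, ← hmm]
    ring
  set φ : ℕ → ZMod m := fun j => e + 2 * (j : ZMod m) with hφ
  have hφinj : ∀ i j, i < m → j < m → φ i = φ j → i = j := by
    intro i j hi hj hij
    simp only [hφ] at hij
    simp only [add_right_inj] at hij
    have h3' : (i : ZMod m) = j := hu2.mul_left_cancel hij
    have h4' := congrArg ZMod.val h3'
    rwa [ZMod.val_cast_of_lt hi, ZMod.val_cast_of_lt hj] at h4'
  have hφsurj : ∀ t : ZMod m, ∃ j, j < m ∧ φ j = t := by
    intro t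
    refine ⟨((t - e) * (2 : ZMod m)⁻¹).val, ZMod.val_lt _, ?_⟩
    simp only [hφ]
    have hv : ((((t - e) * (2 : ZMod m)⁻¹).val : ℕ) : ZMod m) = (t - e) * (2 : ZMod m)⁻¹ :=
      ZMod.natCast_rightInverse _
    rw [hv]
    have h2' : (2 : ZMod m) * ((t - e) * (2 : ZMod m)⁻¹) = t - e := by
      rw [mul_comm (t - e), ← mul_assoc, ZMod.mul_inv_of_unit _ hu2, one_mul]
    rw [h2']; ring
  set D : Finset ℕ := (Finset.range m).filter (fun j => φ j ∈ Q) with hD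
  have hDcard : D.card = k := by
    rw [← hQcard]
    apply Finset.card_bij (fun j _ => φ j)
    · intro a ha; exact (Finset.mem_filter.mp ha).2
    · intro a ha b hb hab
      exact hφinj a b (Finset.mem_range.mp (Finset.mem_filter.mp ha).1)
        (Finset.mem_range.mp (Finset.mem_filter.mp hb).1) hab
    · intro b hb
      obtain ⟨j, hj, hφj⟩ := hφsurj b
      exact ⟨j, Finset.mem_filter.mpr ⟨Finset.mem_range.mpr hj, by rw [hφj]; exact hb⟩, hφj⟩
  have hdc : ∀ j, j + 1 ∈ D → j ∈ D := by
    intro j hj1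
    have hj1' := Finset.mem_filter.mp hj1
    have hjm : j + 1 < m := Finset.mem_range.mp hj1'.1
    refine Finset.mem_filter.mpr ⟨Finset.mem_range.mpr (by omega), ?_⟩
    by_contra hno
    have hsub : φ (j + 1) - 2 = φ j := by simp only [hφ]; push_cast; ring
    have hee : φ (j + 1) = e := huniq _ hj1'.2 (by rw [hsub]; exact hno)
    have h0 : φ (j + 1) = φ 0 := by rw [hee]; simp only [hφ]; simp
    have := hφinj (j + 1) 0 hjm (by omega) h0
    omega
  have hDiff : ∀ j, j ∈ D ↔ j < k := dc_range (Finset.filter_subset _ _) hDcard hdc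
  intro t ht ht1
  obtain ⟨i, hi, hφi⟩ := hφsurj t
  obtain ⟨i', hi', hφi'⟩ := hφsurj (t + 1)
  have hiD : i < k := (hDiff i).mp (Finset.mem_filter.mpr ⟨Finset.mem_range.mpr hi, hφi ▸ ht⟩)
  have hi'D : i' < k :=
    (hDiff i').mp (Finset.mem_filter.mpr ⟨Finset.mem_range.mpr hi', hφi' ▸ ht1⟩)
  have heq : φ i' = φ i + 1 := by rw [hφi, hφi']
  simp only [hφ] at heq
  have h2' : ((2 * i' : ℕ) : ZMod m) = ((2 * i + 1 : ℕ) : ZMod m) := by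
    push_cast
    linear_combination heq
  have hv := congrArg ZMod.val h2'
  rw [ZMod.val_cast_of_lt (by omega), ZMod.val_cast_of_lt (by omega)] at hv
  omega


private lemma exchange {V : Type*} [Fintype V] {n : ℕ} (hn : 7 ≤ n)
    (hV : Fintype.card V = n) (G : ℕ → SimpleGraph V)
    {x y z : V} (hxy : x ≠ y) (hzx : z ≠ x) (hzy : z ≠ y)
    (u : ℕ → V) (w : V)
    (hper : ∀ i, u (i + (n - 4)) = u i)
    (hu_mem : ∀ i ∈ Finset.Icc 1 (n - 4), u i ∈ (({x, y, z} : Set V)ᶜ))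
    (hu_inj : ∀ i ∈ Finset.Icc 1 (n - 4), ∀ j ∈ Finset.Icc 1 (n - 4), u i = u j → i = j)
    (hadj : ∀ i ∈ Finset.Icc 1 (n - 4), (G i).Adj (u i) (u (i + 1)))
    (hw_mem : w ∈ (({x, y, z} : Set V)ᶜ))
    (hw_notC : ∀ i ∈ Finset.Icc 1 (n - 4), u i ≠ w)
    {s : ℕ} (hs1 : 1 ≤ s) (hs2 : s ≤ n - 4)
    {c₁ c₂ : ℕ} (hcc : (c₁ = n - 3 ∧ c₂ = n - 2) ∨ (c₁ = n - 2 ∧ c₂ = n - 3))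
    (hwa : (G c₁).Adj w (u s)) (hwb : (G c₂).Adj w (u (s + 1))) :
    HasRainbowHamCycleOn G (Finset.Icc 1 (n - 2) \ {s}) (({x, y, z} : Set V)ᶜ) (n - 3) := by
  classical
  set m := n - 4 with hmdef
  have hm3 : 3 ≤ m := by omega
  have hm0 : 0 < m := by omega
  set l := m + 1 with hldef
  rw [show n - 3 = l from by omega]
  have hper' := uperiod u m hm0 hper
  have hc1b : m + 1 ≤ c₁ ∧ c₁ ≤ m + 2 := by rcases hcc with ⟨h1, h2⟩ | ⟨h1, h2⟩ <;> omega
  have hc2b : m + 1 ≤ c₂ ∧ c₂ ≤ m + 2 := by rcases hcc with ⟨h1, h2⟩ | ⟨h1, h2⟩ <;> omega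
  have hccne : c₁ ≠ c₂ := by rcases hcc with ⟨h1, h2⟩ | ⟨h1, h2⟩ <;> omega
  have hqmem : ∀ i : ℕ, (s + i) % m + 1 ∈ Finset.Icc 1 m := by
    intro i
    rw [Finset.mem_Icc]
    have := Nat.mod_lt (s + i) hm0
    omega
  have hqeq : ∀ i : ℕ, u (s + 1 + i) = u ((s + i) % m + 1) := by
    intro i
    apply hper'
    have e1 : s + 1 + i = (s + i) + 1 := by ring
    have h1 : (1 : ℕ) % m = 1 := Nat.mod_eq_of_lt (by omega)
    rw [e1, Nat.add_mod (s + i) 1 m, h1]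
  have hmodinj : ∀ i j, i < m → j < m → (s + i) % m = (s + j) % m → i = j := by
    intro i j hi hj hij
    rcases le_total i j with h | h
    · have hle : s + i ≤ s + j := by omega
      have hdvd : m ∣ (s + j) - (s + i) := (Nat.modEq_iff_dvd' hle).mp hij
      have he : (s + j) - (s + i) = j - i := by omega
      rw [he] at hdvd
      have h0 := Nat.eq_zero_of_dvd_of_lt hdvd
      omega
    · have hle : s + j ≤ s + i := by omega
      have hdvd : m ∣ (s + i) - (s + j) := (Nat.modEq_iff_dvd' hle).mp hij.symm
      have he : (s + i) - (s + j) = i - j := by omega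
      rw [he] at hdvd
      have h0 := Nat.eq_zero_of_dvd_of_lt hdvd
      omega
  set v : ℕ → V := fun i => if i = m then w else u (s + 1 + i) with hv
  set c : ℕ → ℕ := fun i => if i = m then c₂ else if i = m - 1 then c₁ else (s + i) % m + 1
    with hc
  have hvne : ∀ i, i < m → v i = u ((s + i) % m + 1) := by
    intro i hi
    simp only [hv]
    rw [if_neg (by omega)]
    exact hqeq i
  have hvm : v m = w := by simp [hv]
  have hvnw : ∀ i, i < m → v i ≠ w := by
    intro i hi
    rw [hvne i hi]
    exact hw_notC _ (hqmem i)
  have hsmallc : ∀ i, i < m - 1 → c i = (s + i) % m + 1 := by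
    intro i hi
    simp only [hc]
    rw [if_neg (by omega), if_neg (by omega)]
  have hcm1 : c (m - 1) = c₁ := by
    simp only [hc]
    rw [if_neg (show ¬ (m - 1 = m) by omega)]
    simp
  have hcm : c m = c₂ := by simp [hc]
  have hinj : ∀ i j, i < l → j < l → v i = v j → i = j := by
    intro i j hi hj hij
    by_cases him : i = m
    · by_cases hjm : j = m
      · omega
      · exact absurd (by rw [← hij, him, hvm]) (hvnw j (by omega)).symm
    · by_cases hjm : j = m
      · exact absurd (by rw [hij, hjm, hvm]) (hvnw i (by omega))
      · have hi' : i < m := by omega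
        have hj' : j < m := by omega
        rw [hvne i hi', hvne j hj'] at hij
        have hq := hu_inj _ (hqmem i) _ (hqmem j) hij
        exact hmodinj i j hi' hj' (by omega)
  have hcompl : ∀ t : V, t ∈ (({x, y, z} : Set V)ᶜ) ↔ (t ≠ x ∧ t ≠ y ∧ t ≠ z) := by
    intro t
    simp [Set.mem_compl_iff]
  have hvmem : ∀ i, i < l → v i ≠ x ∧ v i ≠ y ∧ v i ≠ z := by
    intro i hi
    by_cases him : i = m
    · rw [him, hvm]
      exact (hcompl w).mp hw_mem
    · rw [hvne i (by omega)]
      exact (hcompl _).mp (hu_mem _ (hqmem i))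
  refine ⟨v, c, hinj, ?_, ?_, ?_, by omega, ?_⟩
  · intro t
    rw [hcompl]
    constructor
    · intro ⟨h1, h2, h3⟩
      exact cover hV hxy hzx hzy v l (by omega) hinj hvmem t h1 h2 h3
    · rintro ⟨i, hi, rfl⟩
      exact hvmem i hi
  · intro i hi
    rw [Finset.mem_sdiff, Finset.mem_Icc, Finset.mem_singleton]
    by_cases him : i = m
    · rw [him, hcm]; omega
    · by_cases him1 : i = m - 1
      · rw [him1, hcm1]; omega
      · have hi' : i < m - 1 := by omega
        rw [hsmallc i hi']
        have hlt := Nat.mod_lt (s + i) hm0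
        refine ⟨⟨by omega, by omega⟩, ?_⟩
        intro hEq
        have h2' : (s + (m - 1)) % m = s - 1 := by
          have e1 : s + (m - 1) = (s - 1) + m := by omega
          rw [e1, Nat.add_mod_right, Nat.mod_eq_of_lt (by omega)]
        have := hmodinj i (m - 1) (by omega) (by omega) (by omega)
        omega
  · intro i j hi hj hij
    have hvali : ∀ a, a < l → (a = m ∧ c a = c₂) ∨ (a = m - 1 ∧ c a = c₁) ∨
        (a < m - 1 ∧ c a = (s + a) % m + 1) := by
      intro a ha
      by_cases h1 : a = m
      · exact Or.inl ⟨h1, by rw [h1, hcm]⟩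
      · by_cases h2 : a = m - 1
        · exact Or.inr (Or.inl ⟨h2, by rw [h2, hcm1]⟩)
        · exact Or.inr (Or.inr ⟨by omega, hsmallc a (by omega)⟩)
    have hmi := Nat.mod_lt (s + i) hm0
    have hmj := Nat.mod_lt (s + j) hm0
    rcases hvali i hi with ⟨hi1, hi2⟩ | ⟨hi1, hi2⟩ | ⟨hi1, hi2⟩ <;>
      rcases hvali j hj with ⟨hj1, hj2⟩ | ⟨hj1, hj2⟩ | ⟨hj1, hj2⟩ <;>
      first
        | omega
        | exact hmodinj i j (by omega) (by omega) (by omega)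
  · intro i hi
    by_cases him : i = m
    · rw [him, hcm, hvm]
      have h0 : (m + 1) % l = 0 := by rw [hldef, Nat.mod_self]
      rw [h0]
      have hv0 : v 0 = u (s + 1) := by
        simp only [hv]
        rw [if_neg (by omega)]
      rw [hv0]
      exact hwb
    · by_cases him1 : i = m - 1
      · rw [him1, hcm1]
        have hmod : (m - 1 + 1) % l = m := by
          have e1 : m - 1 + 1 = m := by omega
          rw [e1, Nat.mod_eq_of_lt (by omega)]
        rw [hmod, hvm]
        have hvm1 : v (m - 1) = u s := by
          simp only [hv]
          rw [if_neg (by omega)]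
          have e1 : s + 1 + (m - 1) = s + m := by omega
          rw [e1, hper s]
        rw [hvm1]
        exact hwa.symm
      · have hi' : i < m - 1 := by omega
        rw [hsmallc i hi']
        have hmod : (i + 1) % l = i + 1 := Nat.mod_eq_of_lt (by omega)
        rw [hmod]
        have hvi : v i = u ((s + i) % m + 1) := hvne i (by omega)
        have hcong : (s + 1 + (i + 1)) % m = ((s + i) % m + 1 + 1) % m := by
          have h1 : (s + i) % m ≡ s + i [MOD m] := Nat.mod_modEq _ _
          have h2 : (s + i) % m + 2 ≡ s + i + 2 [MOD m] := h1.add_right 2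
          have e2 : s + 1 + (i + 1) = s + i + 2 := by ring
          have e3 : (s + i) % m + 1 + 1 = (s + i) % m + 2 := by ring
          rw [e2, e3]
          exact h2.symm
        have hvi1 : v (i + 1) = u ((s + i) % m + 1 + 1) := by
          simp only [hv]
          rw [if_neg (by omega)]
          exact hper' _ _ hcong
        rw [hvi, hvi1]
        exact hadj _ (hqmem i)


/-- Claim: no consecutive elements. Under the Cycle Setup,
neither `A` nor `B` contains two integers that are consecutive modulo `n - 4`
(for `s ∈ {1,…,n-4}` the successor of `s` modulo `n - 4` is `s % (n-4) + 1`). -/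
theorem statement16
{V : Type*} [Fintype V] (n : ℕ) (hn : 7 ≤ n) (hodd : Odd n)
    (hV : Fintype.card V = n) (G : ℕ → SimpleGraph V)
    (hdeg : ∀ i ∈ Finset.Icc 1 (n - 1), ∀ v : V,
      n + 1 ≤ 2 * ((G i).neighborSet v).ncard)
    (x y z : V) (hxy : x ≠ y) (hzx : z ≠ x) (hzy : z ≠ y)
    (hxz : ¬ (G (n - 1)).Adj x z)
    (hnoham : ∀ j ∈ Finset.Icc 1 (n - 2),
      ¬ HasRainbowHamCycleOn G (Finset.Icc 1 (n - 2) \ {j})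
        (({x, y, z} : Set V)ᶜ) (n - 3))
    -- the rainbow (n-4)-cycle C = u 1 u 2 ⋯ u (n-4) u 1 in 𝐇_{n-2},
    -- with u extended periodically modulo n - 4
    (u : ℕ → V) (w : V)
    (hper : ∀ i, u (i + (n - 4)) = u i)
    (hu_mem : ∀ i ∈ Finset.Icc 1 (n - 4), u i ∈ (({x, y, z} : Set V)ᶜ))
    (hu_inj : ∀ i ∈ Finset.Icc 1 (n - 4), ∀ j ∈ Finset.Icc 1 (n - 4),
      u i = u j → i = j)
    (hadj : ∀ i ∈ Finset.Icc 1 (n - 4), (G i).Adj (u i) (u (i + 1)))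
    -- w is the unique vertex outside V(C) ∪ {x, y, z}
    (hw_mem : w ∈ (({x, y, z} : Set V)ᶜ))
    (hw_notC : ∀ i ∈ Finset.Icc 1 (n - 4), u i ≠ w)
    (A B : Set ℕ)
    (hA : A = {s : ℕ | s ∈ Finset.Icc 1 (n - 4) ∧ (G (n - 3)).Adj w (u (s + 1))})
    (hB : B = {s : ℕ | s ∈ Finset.Icc 1 (n - 4) ∧ (G (n - 2)).Adj w (u s)}) :
    (∀ s ∈ A, s % (n - 4) + 1 ∉ A) ∧ (∀ s ∈ B, s % (n - 4) + 1 ∉ B) := by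
  classical
  set m := n - 4 with hmdef
  have hm3 : 3 ≤ m := by omega
  obtain ⟨k0, hk0⟩ := hodd
  have hmo : Odd m := ⟨k0 - 2, by omega⟩
  haveI : NeZero m := ⟨by omega⟩
  have hper' := uperiod u m (by omega) hper
  set u' : ZMod m → V := fun t => u (t.val + 1) with hu'
  have hvallt : ∀ t : ZMod m, t.val < m := fun t => ZMod.val_lt t
  have hvmem : ∀ t : ZMod m, t.val + 1 ∈ Finset.Icc 1 m := by
    intro t
    rw [Finset.mem_Icc]
    have := hvallt t
    omega
  have hkey : ∀ a : ℕ, u (a + 1) = u' ((a : ZMod m)) := by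
    intro a
    simp only [hu']
    apply hper'
    rw [ZMod.val_natCast]
    have h1 : (1 : ℕ) % m = 1 := Nat.mod_eq_of_lt (by omega)
    rw [Nat.add_mod a 1 m, h1]
  have hcast : ∀ r : ZMod m, ((r.val : ℕ) : ZMod m) = r := fun r => ZMod.natCast_rightInverse r
  have hcastinj : ∀ i j : ℕ, i < m → j < m → (i : ZMod m) = (j : ZMod m) → i = j := by
    intro i j hi hj h
    have h2 := congrArg ZMod.val h
    rwa [ZMod.val_cast_of_lt hi, ZMod.val_cast_of_lt hj] at h2
  have hcompl : ∀ t : V, t ∈ (({x, y, z} : Set V)ᶜ) ↔ (t ≠ x ∧ t ≠ y ∧ t ≠ z) := by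
    intro t
    simp [Set.mem_compl_iff]
  have hu'w : ∀ r : ZMod m, u' r ≠ w := by
    intro r
    simp only [hu']
    exact hw_notC _ (hvmem r)
  have hu'xyz : ∀ r : ZMod m, u' r ≠ x ∧ u' r ≠ y ∧ u' r ≠ z := by
    intro r
    exact (hcompl _).mp (hu_mem _ (hvmem r))
  have hu'inj : Function.Injective u' := by
    intro t1 t2 h
    simp only [hu'] at h
    have h2 := hu_inj _ (hvmem t1) _ (hvmem t2) h
    exact ZMod.val_injective m (by omega)
  set M3 : Finset (ZMod m) := Finset.univ.filter (fun t => (G (n - 3)).Adj w (u' t)) with hM3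
  set M2 : Finset (ZMod m) := Finset.univ.filter (fun t => (G (n - 2)).Adj w (u' t)) with hM2
  have hcov : ∀ t : V, t ≠ x → t ≠ y → t ≠ z → t ≠ w → ∃ r : ZMod m, u' r = t := by
    intro t h1 h2 h3 h4
    set f : ℕ → V := fun i => if i = m then w else u' (i : ZMod m) with hf
    have hfval : ∀ i, i ≠ m → f i = u' (i : ZMod m) := by
      intro i hi
      simp only [hf]
      rw [if_neg hi]
    have hfm : f m = w := by simp [hf]
    have hfinj : ∀ i j, i < m + 1 → j < m + 1 → f i = f j → i = j := by
      intro i j hi hj hij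
      by_cases him : i = m
      · by_cases hjm : j = m
        · omega
        · exact absurd (by rw [← hij, him, hfm]) ((hfval j hjm) ▸ (hu'w (j : ZMod m))).symm
      · by_cases hjm : j = m
        · exact absurd (by rw [hij, hjm, hfm]) ((hfval i him) ▸ (hu'w (i : ZMod m)))
        · rw [hfval i him, hfval j hjm] at hij
          exact hcastinj i j (by omega) (by omega) (hu'inj hij)
    have hfmem : ∀ i, i < m + 1 → f i ≠ x ∧ f i ≠ y ∧ f i ≠ z := by
      intro i hi
      by_cases him : i = m
      · rw [him, hfm]
        exact (hcompl w).mp hw_mem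
      · rw [hfval i him]
        exact hu'xyz _
    obtain ⟨i, hi, hfi⟩ := cover hV hxy hzx hzy f (m + 1) (by omega) hfinj hfmem t h1 h2 h3
    have him : i ≠ m := by
      intro hEq
      rw [hEq, hfm] at hfi
      exact h4 hfi.symm
    exact ⟨(i : ZMod m), by rw [← hfi, hfval i him]⟩
  have hsize : ∀ cc : ℕ, 1 ≤ cc → cc ≤ n - 1 →
      (m - 1) / 2 ≤ (Finset.univ.filter (fun t : ZMod m => (G cc).Adj w (u' t))).card := by
    intro cc h1 h2
    set M := Finset.univ.filter (fun t : ZMod m => (G cc).Adj w (u' t)) with hM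
    have hdw := hdeg cc (by rw [Finset.mem_Icc]; exact ⟨h1, h2⟩) w
    set Nb := (G cc).neighborFinset w with hNb
    have hNbcard : ((G cc).neighborSet w).ncard = Nb.card := by
      rw [hNb, SimpleGraph.neighborFinset_def, Set.ncard_eq_toFinset_card']
    rw [hNbcard] at hdw
    set T : Finset V := {x, y, z} with hT
    have hTcard : T.card ≤ 3 := by
      have h3 := Finset.card_insert_le x ({y, z} : Finset V)
      have h4 := Finset.card_insert_le y ({z} : Finset V)
      have h5 : ({z} : Finset V).card = 1 := Finset.card_singleton z
      rw [hT]
      omega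
    have hsplit : Nb.card ≤ (Nb \ T).card + T.card := Finset.card_le_card_sdiff_add_card
    have hmap : (Nb \ T) ⊆ M.image u' := by
      intro t ht
      rw [Finset.mem_sdiff] at ht
      have hadjt : (G cc).Adj w t := by
        have := ht.1
        rw [hNb, SimpleGraph.mem_neighborFinset] at this
        exact this
      have htw : t ≠ w := hadjt.ne'
      have h3 : t ∉ T := ht.2
      rw [hT] at h3
      simp only [Finset.mem_insert, Finset.mem_singleton, not_or] at h3
      obtain ⟨r, hr⟩ := hcov t h3.1 h3.2.1 h3.2.2 htw
      rw [Finset.mem_image]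
      exact ⟨r, Finset.mem_filter.mpr ⟨Finset.mem_univ _, by rw [hr]; exact hadjt⟩, hr⟩
    have himg : (M.image u').card ≤ M.card := Finset.card_image_le
    have hfin := Finset.card_le_card hmap
    omega
  have hM3card : (m - 1) / 2 ≤ M3.card := hsize (n - 3) (by omega) (by omega)
  have hM2card : (m - 1) / 2 ≤ M2.card := hsize (n - 2) (by omega) (by omega)
  have h32 : ∀ r : ZMod m, ¬(r ∈ M3 ∧ r + 1 ∈ M2) := by
    rintro r ⟨h3, h2'⟩
    rw [hM3, Finset.mem_filter] at h3
    rw [hM2, Finset.mem_filter] at h2'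
    have hus : u (r.val + 1) = u' r := by rw [hkey r.val, hcast]
    have hus1 : u (r.val + 1 + 1) = u' (r + 1) := by
      rw [hkey (r.val + 1)]
      congr 1
      push_cast
      rw [hcast]
    have hexch := exchange hn hV G hxy hzx hzy u w hper hu_mem hu_inj hadj hw_mem hw_notC
      (s := r.val + 1) (by omega) (by have := hvallt r; omega)
      (c₁ := n - 3) (c₂ := n - 2) (Or.inl ⟨rfl, rfl⟩)
      (by rw [hus]; exact h3.2) (by rw [hus1]; exact h2'.2)
    exact hnoham (r.val + 1) (by rw [Finset.mem_Icc]; have := hvallt r; omega) hexch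
  have h23 : ∀ r : ZMod m, ¬(r ∈ M2 ∧ r + 1 ∈ M3) := by
    rintro r ⟨h2', h3⟩
    rw [hM2, Finset.mem_filter] at h2'
    rw [hM3, Finset.mem_filter] at h3
    have hus : u (r.val + 1) = u' r := by rw [hkey r.val, hcast]
    have hus1 : u (r.val + 1 + 1) = u' (r + 1) := by
      rw [hkey (r.val + 1)]
      congr 1
      push_cast
      rw [hcast]
    have hexch := exchange hn hV G hxy hzx hzy u w hper hu_mem hu_inj hadj hw_mem hw_notC
      (s := r.val + 1) (by omega) (by have := hvallt r; omega)
      (c₁ := n - 2) (c₂ := n - 3) (Or.inr ⟨rfl, rfl⟩)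
      (by rw [hus]; exact h2'.2) (by rw [hus1]; exact h3.2)
    exact hnoham (r.val + 1) (by rw [Finset.mem_Icc]; have := hvallt r; omega) hexch
  have hnc3 : ∀ t ∈ M3, t + 1 ∉ M3 := no_consec hm3 hmo M2 M3 hM2card hM3card h23 h32
  have hnc2 : ∀ t ∈ M2, t + 1 ∉ M2 := no_consec hm3 hmo M3 M2 hM3card hM2card h32 h23
  have hmodcast : ∀ s : ℕ, ((s % m : ℕ) : ZMod m) = (s : ZMod m) := fun s => ZMod.natCast_mod s m
  constructor
  · intro s hsA hs'A
    rw [hA, Set.mem_setOf_eq] at hsA hs'A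
    obtain ⟨hs1, hadjA⟩ := hsA
    rw [Finset.mem_Icc] at hs1
    obtain ⟨hs1', hadjA'⟩ := hs'A
    have h1 : ((s : ZMod m)) ∈ M3 := by
      rw [hM3, Finset.mem_filter]
      refine ⟨Finset.mem_univ _, ?_⟩
      rw [← hkey s]
      exact hadjA
    have h2' : ((s : ZMod m)) + 1 ∈ M3 := by
      rw [hM3, Finset.mem_filter]
      refine ⟨Finset.mem_univ _, ?_⟩
      have hcc' : ((s % m + 1 : ℕ) : ZMod m) = (s : ZMod m) + 1 := by
        push_cast
        rw [hmodcast]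
      rw [← hcc', ← hkey (s % m + 1)]
      exact hadjA'
    exact hnc3 _ h1 h2'
  · intro s hsB hs'B
    rw [hB, Set.mem_setOf_eq] at hsB hs'B
    obtain ⟨hs1, hadjB⟩ := hsB
    rw [Finset.mem_Icc] at hs1
    obtain ⟨hs1', hadjB'⟩ := hs'B
    have hr : ((s - 1 : ℕ) : ZMod m) ∈ M2 := by
      rw [hM2, Finset.mem_filter]
      refine ⟨Finset.mem_univ _, ?_⟩
      rw [← hkey (s - 1)]
      rw [show s - 1 + 1 = s from by omega]
      exact hadjB
    have hr1 : ((s - 1 : ℕ) : ZMod m) + 1 ∈ M2 := by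
      rw [hM2, Finset.mem_filter]
      refine ⟨Finset.mem_univ _, ?_⟩
      have hcc' : ((s % m : ℕ) : ZMod m) = ((s - 1 : ℕ) : ZMod m) + 1 := by
        rw [hmodcast]
        conv_lhs => rw [show s = (s - 1) + 1 from by omega]
        push_cast
        ring
      rw [← hcc', ← hkey (s % m)]
      exact hadjB'
    exact hnc2 _ hr hr1
end

section
/- Assume the Cycle Setup. If {1, …, n−4} ∖ (A ∪ B) = {s} for a single element s, then s−1 ∈ B and s+1 ∈ A (all integers taken modulo n−4). -/
set_option autoImplicit false

private lemma cancelMod (m a i j : ℕ) (hi : i < m) (hj : j < m)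
    (h : (a + i) % m = (a + j) % m) : i = j := by
  have h2 : i ≡ j [MOD m] := Nat.ModEq.add_left_cancel' a h
  rwa [Nat.ModEq, Nat.mod_eq_of_lt hi, Nat.mod_eq_of_lt hj] at h2

private lemma modSucc (m c : ℕ) (hm : 2 ≤ m) : (c % m + 1) % m = (c + 1) % m := by
  have h1 : 1 % m = 1 := Nat.mod_eq_of_lt (by omega)
  conv_rhs => rw [Nat.add_mod c 1 m, h1]

private lemma addModLeft (m t X : ℕ) : (t + X % m) % m = (t + X) % m :=
  (Nat.mod_modEq X m).add_left t

/-- every vertex of the complement of {x,y,z} is w or a cycle vertex -/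
private lemma cycSurj {V : Type*} [Fintype V] (n : ℕ) (hn : 7 ≤ n)
    (hV : Fintype.card V = n) (x y z : V)
    (hxy : x ≠ y) (hzx : z ≠ x) (hzy : z ≠ y)
    (u : ℕ → V) (w : V)
    (hu_mem : ∀ i ∈ Finset.Icc 1 (n - 4), u i ∈ (({x, y, z} : Set V)ᶜ))
    (hu_inj : ∀ i ∈ Finset.Icc 1 (n - 4), ∀ j ∈ Finset.Icc 1 (n - 4),
      u i = u j → i = j)
    (hw_mem : w ∈ (({x, y, z} : Set V)ᶜ))
    (hw_notC : ∀ i ∈ Finset.Icc 1 (n - 4), u i ≠ w) :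
    ∀ v : V, v ∈ (({x, y, z} : Set V)ᶜ) →
      v = w ∨ ∃ r ∈ Finset.Icc 1 (n - 4), u r = v := by
  classical
  have hbridge : ∀ a : V, a ∈ (({x, y, z} : Set V)ᶜ) ↔ a ∉ ({x, y, z} : Finset V) := by
    intro a
    simp [Set.mem_compl_iff]
  intro v hv
  have hwni : w ∉ (Finset.Icc 1 (n - 4)).image u := by
    intro hmem
    obtain ⟨i, hi, hiw⟩ := Finset.mem_image.mp hmem
    exact hw_notC i hi hiw
  have himg : ((Finset.Icc 1 (n - 4)).image u).card = n - 4 := by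
    rw [Finset.card_image_of_injOn (fun i hi j hj => hu_inj i hi j hj), Nat.card_Icc]
    omega
  have hxyzcard : ({x, y, z} : Finset V).card = 3 := by
    rw [Finset.card_insert_of_notMem (by simp [hxy, Ne.symm hzx]),
      Finset.card_insert_of_notMem (by simp [Ne.symm hzy]), Finset.card_singleton]
  have hSfin : (({x, y, z} : Finset V)ᶜ).card = n - 3 := by
    rw [Finset.card_compl, hxyzcard, hV]
  have hsub : insert w ((Finset.Icc 1 (n - 4)).image u) ⊆ ({x, y, z} : Finset V)ᶜ := by
    intro a ha
    rw [Finset.mem_compl, ← hbridge]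
    rcases Finset.mem_insert.mp ha with rfl | ha
    · exact hw_mem
    · obtain ⟨i, hi, rfl⟩ := Finset.mem_image.mp ha
      exact hu_mem i hi
  have hcardT : (insert w ((Finset.Icc 1 (n - 4)).image u)).card = n - 3 := by
    rw [Finset.card_insert_of_notMem hwni, himg]; omega
  have hTeq : insert w ((Finset.Icc 1 (n - 4)).image u) = ({x, y, z} : Finset V)ᶜ :=
    Finset.eq_of_subset_of_card_le hsub (by rw [hcardT, hSfin])
  have hvT : v ∈ insert w ((Finset.Icc 1 (n - 4)).image u) := by
    rw [hTeq, Finset.mem_compl, ← hbridge]; exact hv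
  rcases Finset.mem_insert.mp hvT with rfl | h
  · exact Or.inl rfl
  · obtain ⟨r, hr, hru⟩ := Finset.mem_image.mp h
    exact Or.inr ⟨r, hr, hru⟩

private lemma insertion {V : Type*} [Fintype V] (n : ℕ) (hn : 7 ≤ n)
    (hV : Fintype.card V = n) (G : ℕ → SimpleGraph V) (x y z : V)
    (hxy : x ≠ y) (hzx : z ≠ x) (hzy : z ≠ y)
    (u : ℕ → V) (w : V)
    (hper : ∀ i, u (i + (n - 4)) = u i)
    (hu_mem : ∀ i ∈ Finset.Icc 1 (n - 4), u i ∈ (({x, y, z} : Set V)ᶜ))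
    (hu_inj : ∀ i ∈ Finset.Icc 1 (n - 4), ∀ j ∈ Finset.Icc 1 (n - 4),
      u i = u j → i = j)
    (hadj : ∀ i ∈ Finset.Icc 1 (n - 4), (G i).Adj (u i) (u (i + 1)))
    (hw_mem : w ∈ (({x, y, z} : Set V)ᶜ))
    (hw_notC : ∀ i ∈ Finset.Icc 1 (n - 4), u i ≠ w)
    (t : ℕ) (ht : t ∈ Finset.Icc 1 (n - 4)) (p q : ℕ)
    (hpq : p = n - 3 ∧ q = n - 2 ∨ p = n - 2 ∧ q = n - 3)
    (hp : (G p).Adj w (u t)) (hq : (G q).Adj w (u (t + 1))) :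
    HasRainbowHamCycleOn G (Finset.Icc 1 (n - 2) \ {t}) (({x, y, z} : Set V)ᶜ) (n - 3) := by
  classical
  set m := n - 4 with hmdef
  have hm3 : 3 ≤ m := by omega
  have hm0 : 0 < m := by omega
  obtain ⟨ht1, htm⟩ := Finset.mem_Icc.mp ht
  have hperk : ∀ a k : ℕ, u (a + k * m) = u a := by
    intro a k
    induction k with
    | zero => simp
    | succ k ih =>
      have h1 : a + (k + 1) * m = (a + k * m) + m := by ring
      rw [h1, hper, ih]
  have hu_red : ∀ c : ℕ, u (c + 1) = u (c % m + 1) := by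
    intro c
    obtain ⟨a, b, hb, rfl⟩ : ∃ a b, b < m ∧ c = b + a * m :=
      ⟨c / m, c % m, Nat.mod_lt _ hm0, (Nat.mod_add_div' c m).symm⟩
    have h1 : (b + a * m) % m = b := by
      rw [Nat.add_mul_mod_self_right, Nat.mod_eq_of_lt hb]
    have h2 : b + a * m + 1 = (b + 1) + a * m := by ring
    rw [h1, h2, hperk]
  have hu_red2 : ∀ c : ℕ, u (c + 2) = u (c % m + 2) := by
    intro c
    obtain ⟨a, b, hb, rfl⟩ : ∃ a b, b < m ∧ c = b + a * m :=
      ⟨c / m, c % m, Nat.mod_lt _ hm0, (Nat.mod_add_div' c m).symm⟩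
    have h1 : (b + a * m) % m = b := by
      rw [Nat.add_mul_mod_self_right, Nat.mod_eq_of_lt hb]
    have h2 : b + a * m + 2 = (b + 2) + a * m := by ring
    rw [h1, h2, hperk]
  have hmem_rep : ∀ c : ℕ, c % m + 1 ∈ Finset.Icc 1 m := by
    intro c
    have := Nat.mod_lt c hm0
    exact Finset.mem_Icc.mpr ⟨by omega, by omega⟩
  have hadj' : ∀ c : ℕ, (G (c % m + 1)).Adj (u (c % m + 1)) (u (c % m + 2)) := by
    intro c
    have h := hadj _ (hmem_rep c)
    have e : c % m + 1 + 1 = c % m + 2 := by omega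
    rwa [e] at h
  have hsurj := cycSurj n hn hV x y z hxy hzx hzy u w hu_mem hu_inj hw_mem hw_notC
  have hl : n - 3 = m + 1 := by omega
  rw [hl]
  refine ⟨(fun i => if i = m then w else u ((t + i) % m + 1)),
    (fun i => if i = m - 1 then p else if i = m then q else (t + i) % m + 1),
    ?_, ?_, ?_, ?_, by omega, ?_⟩
  · -- vertex injectivity
    intro i j hi hj hij
    simp only at hij
    by_cases him : i = m <;> by_cases hjm : j = m
    · omega
    · rw [if_pos him, if_neg hjm] at hij
      exact absurd hij.symm (hw_notC _ (hmem_rep (t + j)))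
    · rw [if_neg him, if_pos hjm] at hij
      exact absurd hij (hw_notC _ (hmem_rep (t + i)))
    · rw [if_neg him, if_neg hjm] at hij
      have := hu_inj _ (hmem_rep (t + i)) _ (hmem_rep (t + j)) hij
      exact cancelMod m t i j (by omega) (by omega) (by omega)
  · -- vertex surjectivity
    intro v
    constructor
    · intro hv
      rcases hsurj v hv with rfl | ⟨r, hr, rfl⟩
      · exact ⟨m, by omega, by simp⟩
      · obtain ⟨hr1, hrm⟩ := Finset.mem_Icc.mp hr
        refine ⟨(r + (m - t) + (m - 1)) % m, by
          have := Nat.mod_lt (r + (m - t) + (m - 1)) hm0; omega, ?_⟩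
        simp only
        rw [if_neg (by have := Nat.mod_lt (r + (m - t) + (m - 1)) hm0; omega)]
        have e1 : (t + (r + (m - t) + (m - 1)) % m) % m = (r - 1) % m := by
          rw [addModLeft, show t + (r + (m - t) + (m - 1)) = (r - 1) + 2 * m from by omega,
            Nat.add_mul_mod_self_right]
        rw [e1, ← hu_red (r - 1), show r - 1 + 1 = r from by omega]
    · rintro ⟨i, hi, rfl⟩
      simp only
      by_cases him : i = m
      · rw [if_pos him]; exact hw_mem
      · rw [if_neg him]; exact hu_mem _ (hmem_rep (t + i))
  · -- color membership
    intro i hi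
    simp only
    rw [Finset.mem_sdiff, Finset.mem_Icc, Finset.mem_singleton]
    by_cases him1 : i = m - 1
    · rw [if_pos him1]; omega
    · rw [if_neg him1]
      by_cases him : i = m
      · rw [if_pos him]; omega
      · rw [if_neg him]
        have hlt := Nat.mod_lt (t + i) hm0
        refine ⟨⟨by omega, by omega⟩, ?_⟩
        intro hti
        have h1 : (t + i) % m = t - 1 := by omega
        have h2 : ((t - 1) + (i + 1)) % m = ((t - 1) + 0) % m := by
          rw [show (t - 1) + (i + 1) = t + i from by omega, h1, Nat.add_zero,
            Nat.mod_eq_of_lt (by omega)]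
        have := cancelMod m (t - 1) (i + 1) 0 (by omega) (by omega) h2
        omega
  · -- color injectivity
    intro i j hi hj hij
    simp only at hij
    have hpqne : p ≠ q := by omega
    have hpbig : m < p := by omega
    have hqbig : m < q := by omega
    by_cases hi1 : i = m - 1 <;> by_cases hj1 : j = m - 1
    · omega
    · rw [if_pos hi1, if_neg hj1] at hij
      by_cases hjm : j = m
      · rw [if_pos hjm] at hij; exact absurd hij hpqne
      · rw [if_neg hjm] at hij
        have := Nat.mod_lt (t + j) hm0; omega
    · rw [if_neg hi1, if_pos hj1] at hij
      by_cases him : i = m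
      · rw [if_pos him] at hij; exact absurd hij.symm hpqne
      · rw [if_neg him] at hij
        have := Nat.mod_lt (t + i) hm0; omega
    · rw [if_neg hi1, if_neg hj1] at hij
      by_cases him : i = m <;> by_cases hjm : j = m
      · omega
      · rw [if_pos him, if_neg hjm] at hij
        have := Nat.mod_lt (t + j) hm0; omega
      · rw [if_neg him, if_pos hjm] at hij
        have := Nat.mod_lt (t + i) hm0; omega
      · rw [if_neg him, if_neg hjm] at hij
        exact cancelMod m t i j (by omega) (by omega) (by omega)
  · -- adjacency
    intro i hi
    simp only
    by_cases him : i = m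
    · subst him
      rw [if_neg (by omega), if_pos rfl, if_pos rfl, Nat.mod_self, if_neg (by omega)]
      have hq' : (G q).Adj w (u (t % m + 1)) := by rw [← hu_red t]; exact hq
      exact hq'
    · have hstep : (i + 1) % (m + 1) = i + 1 := Nat.mod_eq_of_lt (by omega)
      rw [hstep, if_neg him]
      by_cases him1 : i = m - 1
      · subst him1
        rw [if_pos rfl, if_neg (show ¬ m - 1 = m by omega), if_pos (by omega : m - 1 + 1 = m)]
        have e1 : (t + (m - 1)) % m = t - 1 := by
          rw [show t + (m - 1) = (t - 1) + m from by omega, Nat.add_mod_right,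
            Nat.mod_eq_of_lt (by omega)]
        rw [e1, show t - 1 + 1 = t from by omega]
        exact hp.symm
      · rw [if_neg him1, if_neg him, if_neg (by omega : ¬ i + 1 = m)]
        have h := hadj' (t + i)
        have e2 : u ((t + i) % m + 2) = u ((t + (i + 1)) % m + 1) := by
          rw [← hu_red2 (t + i), show t + i + 2 = (t + (i + 1)) + 1 from by omega,
            hu_red (t + (i + 1))]
        rwa [e2] at h

open Classical in
private lemma core (m K d : ℕ) (hmK : m = 2 * K + 1) (hK : 1 ≤ K) (hd : d < m)
    (P Q : ℕ → Prop)
    (hPm : ∀ a b : ℕ, a % m = b % m → (P a ↔ P b))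
    (hQm : ∀ a b : ℕ, a % m = b % m → (Q a ↔ Q b))
    (hole1 : ¬ P (d + 1)) (hole2 : ¬ Q d)
    (cover : ∀ c : ℕ, c % m ≠ d → P (c + 1) ∨ Q c)
    (hdisj : ∀ c : ℕ, ¬ (Q c ∧ P (c + 1)))
    (hstep : ∀ c : ℕ, ¬ (P c ∧ Q (c + 1)))
    (degP : m - 1 ≤ 2 * ((Finset.range m).filter (fun c => P (c + 1))).card)
    (degQ : m - 1 ≤ 2 * ((Finset.range m).filter (fun c => Q c)).card) :
    Q (d + m - 1) ∧ P (d + 2) := by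
  have hm3 : 3 ≤ m := by omega
  set Pa := (Finset.range m).filter (fun c => P (c + 1)) with hPa
  set Qa := (Finset.range m).filter (fun c => Q c) with hQa
  have hdisj2 : Disjoint Pa Qa := by
    rw [Finset.disjoint_left]
    intro c hc1 hc2
    exact hdisj c ⟨(Finset.mem_filter.mp hc2).2, (Finset.mem_filter.mp hc1).2⟩
  have hunion : Pa ∪ Qa = (Finset.range m).erase d := by
    ext c
    simp only [hPa, hQa, Finset.mem_union, Finset.mem_filter, Finset.mem_erase,
      Finset.mem_range]
    constructor
    · rintro (⟨hc, hPc⟩ | ⟨hc, hQc⟩)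
      · exact ⟨by rintro rfl; exact hole1 hPc, hc⟩
      · exact ⟨by rintro rfl; exact hole2 hQc, hc⟩
    · rintro ⟨hne, hc⟩
      rcases cover c (by rwa [Nat.mod_eq_of_lt hc]) with h | h
      · exact Or.inl ⟨hc, h⟩
      · exact Or.inr ⟨hc, h⟩
  have hcards : Pa.card + Qa.card = m - 1 := by
    rw [← Finset.card_union_of_disjoint hdisj2, hunion,
      Finset.card_erase_of_mem (Finset.mem_range.mpr hd), Finset.card_range]
  constructor
  · -- Q (d + m - 1)
    by_contra hnQ
    have hbase : P (d + m) := by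
      have hne : (d + m - 1) % m ≠ d := by
        intro h
        rcases Nat.eq_zero_or_pos d with rfl | hdpos
        · rw [show 0 + m - 1 = m - 1 from by omega, Nat.mod_eq_of_lt (by omega)] at h
          omega
        · rw [show d + m - 1 = (d - 1) + m from by omega, Nat.add_mod_right,
            Nat.mod_eq_of_lt (by omega)] at h
          omega
      rcases cover (d + m - 1) hne with h | h
      · rwa [show d + m - 1 + 1 = d + m from by omega] at h
      · exact absurd h hnQ
    have hchain : ∀ k, k ≤ K → P (d + m + 2 * k) := by
      intro k
      induction k with
      | zero => intro _; simpa using hbase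
      | succ k ih =>
        intro hk
        have hp1 := ih (by omega)
        have hnq1 : ¬ Q (d + m + 2 * k + 1) := fun hq => hstep _ ⟨hp1, hq⟩
        have hne : (d + m + 2 * k + 1) % m ≠ d := by
          intro h
          rw [show d + m + 2 * k + 1 = (d + 2 * k + 1) + m from by omega,
            Nat.add_mod_right] at h
          rcases Nat.lt_or_ge (d + 2 * k + 1) m with h' | h'
          · rw [Nat.mod_eq_of_lt h'] at h; omega
          · rw [show d + 2 * k + 1 = (d + 2 * k + 1 - m) + m from by omega,
              Nat.add_mod_right, Nat.mod_eq_of_lt (by omega)] at h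
            omega
        rcases cover (d + m + 2 * k + 1) hne with h | h
        · rwa [show d + m + 2 * k + 1 + 1 = d + m + 2 * (k + 1) from by omega] at h
        · exact absurd h hnq1
    have hcount : K + 1 ≤ Pa.card := by
      have hmaps : ∀ k ∈ Finset.range (K + 1),
          (d + m - 1 + 2 * k) % m ∈ Pa := by
        intro k hk
        rw [Finset.mem_range] at hk
        refine Finset.mem_filter.mpr ⟨Finset.mem_range.mpr (Nat.mod_lt _ (by omega)), ?_⟩
        refine (hPm _ _ ?_).mpr (hchain k (by omega))
        rw [modSucc m _ (by omega), show d + m - 1 + 2 * k + 1 = d + m + 2 * k from by omega]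
      have hinj : Set.InjOn (fun k => (d + m - 1 + 2 * k) % m) ↑(Finset.range (K + 1)) := by
        intro a ha b hb hab
        simp only [Finset.coe_range, Set.mem_Iio] at ha hb
        have h2 : ((d + m - 1) + 2 * a) % m = ((d + m - 1) + 2 * b) % m := hab
        have := cancelMod m (d + m - 1) (2 * a) (2 * b) (by omega) (by omega) h2
        omega
      calc K + 1 = (Finset.range (K + 1)).card := (Finset.card_range _).symm
        _ ≤ Pa.card := Finset.card_le_card_of_injOn _ hmaps hinj
    omega
  · -- P (d + 2)
    by_contra hnP
    have hbase : Q (d + 1) := by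
      have hne : (d + 1) % m ≠ d := by
        intro h
        rcases Nat.lt_or_ge (d + 1) m with h' | h'
        · rw [Nat.mod_eq_of_lt h'] at h; omega
        · rw [show d + 1 = 0 + m from by omega, Nat.add_mod_right] at h
          simp at h; omega
      rcases cover (d + 1) hne with h | h
      · exact absurd (by rwa [show d + 1 + 1 = d + 2 from by omega] at h) hnP
      · exact h
    have hchain : ∀ k, k ≤ K → Q (d + 1 + (m - 2) * k) := by
      intro k
      induction k with
      | zero => intro _; simpa using hbase
      | succ k ih =>
        intro hk
        have hq1 := ih (by omega)
        have hexp : (m - 2) * (k + 1) = (m - 2) * k + (m - 2) := by ring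
        have hq2 : Q (d + 1 + (m - 2) * (k + 1) + 2) := by
          refine (hQm _ _ ?_).mpr hq1
          rw [show d + 1 + (m - 2) * (k + 1) + 2 = (d + 1 + (m - 2) * k) + m from by omega,
            Nat.add_mod_right]
        have hnp1 : ¬ P (d + 1 + (m - 2) * (k + 1) + 1) := by
          intro hp
          exact hstep _ ⟨hp, by
            rwa [show d + 1 + (m - 2) * (k + 1) + 1 + 1 = d + 1 + (m - 2) * (k + 1) + 2
              from by omega]⟩
        have hmul : ∀ c : ℕ, (m - 2) * c + 2 * c = m * c := by
          intro c
          have h1 := Nat.sub_mul m 2 c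
          have h2 : 2 * c ≤ m * c := Nat.mul_le_mul_right _ (by omega)
          omega
        have hne : (d + 1 + (m - 2) * (k + 1)) % m ≠ d := by
          intro h
          have hE : (d + 1 + (m - 2) * (k + 1)) ≡ d [MOD m] := by
            rw [Nat.ModEq, h, Nat.mod_eq_of_lt hd]
          have hE2 := hE.add_right (2 * (k + 1))
          have h5 : (d + 1 + (m - 2) * (k + 1) + 2 * (k + 1)) % m
              = (d + 2 * (k + 1)) % m := hE2
          rw [show d + 1 + (m - 2) * (k + 1) + 2 * (k + 1) = (d + 1) + m * (k + 1) from by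
              have := hmul (k + 1); omega,
            Nat.add_mul_mod_self_left] at h5
          have := cancelMod m d 1 (2 * (k + 1)) (by omega) (by omega) h5
          omega
        rcases cover _ hne with h | h
        · exact absurd h hnp1
        · exact h
    have hcount : K + 1 ≤ Qa.card := by
      have hmaps : ∀ k ∈ Finset.range (K + 1),
          (d + 1 + (m - 2) * k) % m ∈ Qa := by
        intro k hk
        rw [Finset.mem_range] at hk
        refine Finset.mem_filter.mpr ⟨Finset.mem_range.mpr (Nat.mod_lt _ (by omega)), ?_⟩
        exact (hQm _ _ (Nat.mod_mod_of_dvd _ dvd_rfl)).mpr (hchain k (by omega))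
      have hmul : ∀ c : ℕ, (m - 2) * c + 2 * c = m * c := by
        intro c
        have h1 := Nat.sub_mul m 2 c
        have h2 : 2 * c ≤ m * c := Nat.mul_le_mul_right _ (by omega)
        omega
      have hinj : Set.InjOn (fun k => (d + 1 + (m - 2) * k) % m) ↑(Finset.range (K + 1)) := by
        intro a ha b hb hab
        simp only [Finset.coe_range, Set.mem_Iio] at ha hb
        have ME : (d + 1 + (m - 2) * a) ≡ (d + 1 + (m - 2) * b) [MOD m] := hab
        have ME2 := ME.add_right (2 * a + 2 * b)
        have h5 : (d + 1 + (m - 2) * a + (2 * a + 2 * b)) % m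
            = (d + 1 + (m - 2) * b + (2 * a + 2 * b)) % m := ME2
        rw [show d + 1 + (m - 2) * a + (2 * a + 2 * b) = ((d + 1) + 2 * b) + m * a from by
            have := hmul a; omega,
          show d + 1 + (m - 2) * b + (2 * a + 2 * b) = ((d + 1) + 2 * a) + m * b from by
            have := hmul b; omega,
          Nat.add_mul_mod_self_left, Nat.add_mul_mod_self_left] at h5
        have := cancelMod m (d + 1) (2 * b) (2 * a) (by omega) (by omega) h5
        omega
      calc K + 1 = (Finset.range (K + 1)).card := (Finset.card_range _).symm
        _ ≤ Qa.card := Finset.card_le_card_of_injOn _ hmaps hinj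
    omega

/-- Claim: the missing index. Under the Cycle Setup, if
`{1,…,n-4} ∖ (A ∪ B)` is a single element `s`, then `s - 1 ∈ B` and
`s + 1 ∈ A`, the predecessor and successor being taken modulo `n - 4`
on `{1,…,n-4}`. -/
theorem statement17
{V : Type*} [Fintype V] (n : ℕ) (hn : 7 ≤ n) (hodd : Odd n)
    (hV : Fintype.card V = n) (G : ℕ → SimpleGraph V)
    (hdeg : ∀ i ∈ Finset.Icc 1 (n - 1), ∀ v : V,
      n + 1 ≤ 2 * ((G i).neighborSet v).ncard)
    (x y z : V) (hxy : x ≠ y) (hzx : z ≠ x) (hzy : z ≠ y)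
    (hxz : ¬ (G (n - 1)).Adj x z)
    (hnoham : ∀ j ∈ Finset.Icc 1 (n - 2),
      ¬ HasRainbowHamCycleOn G (Finset.Icc 1 (n - 2) \ {j})
        (({x, y, z} : Set V)ᶜ) (n - 3))
    -- the rainbow (n-4)-cycle C = u 1 u 2 ⋯ u (n-4) u 1 in 𝐇_{n-2},
    -- with u extended periodically modulo n - 4
    (u : ℕ → V) (w : V)
    (hper : ∀ i, u (i + (n - 4)) = u i)
    (hu_mem : ∀ i ∈ Finset.Icc 1 (n - 4), u i ∈ (({x, y, z} : Set V)ᶜ))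
    (hu_inj : ∀ i ∈ Finset.Icc 1 (n - 4), ∀ j ∈ Finset.Icc 1 (n - 4),
      u i = u j → i = j)
    (hadj : ∀ i ∈ Finset.Icc 1 (n - 4), (G i).Adj (u i) (u (i + 1)))
    -- w is the unique vertex outside V(C) ∪ {x, y, z}
    (hw_mem : w ∈ (({x, y, z} : Set V)ᶜ))
    (hw_notC : ∀ i ∈ Finset.Icc 1 (n - 4), u i ≠ w)
    (A B : Set ℕ)
    (hA : A = {s : ℕ | s ∈ Finset.Icc 1 (n - 4) ∧ (G (n - 3)).Adj w (u (s + 1))})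
    (hB : B = {s : ℕ | s ∈ Finset.Icc 1 (n - 4) ∧ (G (n - 2)).Adj w (u s)})
    (s : ℕ) (hs : (↑(Finset.Icc 1 (n - 4)) : Set ℕ) \ (A ∪ B) = {s}) :
    (if s = 1 then n - 4 else s - 1) ∈ B ∧ s % (n - 4) + 1 ∈ A := by
  classical
  set m := n - 4 with hmdef
  have hm3 : 3 ≤ m := by omega
  have hm0 : 0 < m := by omega
  obtain ⟨jj, hjj⟩ := hodd
  obtain ⟨K, hmK, hK⟩ : ∃ K, m = 2 * K + 1 ∧ 1 ≤ K := ⟨jj - 2, by omega, by omega⟩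
  -- basic u facts
  have hperk : ∀ a k : ℕ, u (a + k * m) = u a := by
    intro a k
    induction k with
    | zero => simp
    | succ k ih =>
      have h1 : a + (k + 1) * m = (a + k * m) + m := by ring
      rw [h1, hper, ih]
  have hu_red : ∀ c : ℕ, u (c + 1) = u (c % m + 1) := by
    intro c
    obtain ⟨a, b, hb, rfl⟩ : ∃ a b, b < m ∧ c = b + a * m :=
      ⟨c / m, c % m, Nat.mod_lt _ hm0, (Nat.mod_add_div' c m).symm⟩
    have h1 : (b + a * m) % m = b := by
      rw [Nat.add_mul_mod_self_right, Nat.mod_eq_of_lt hb]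
    have h2 : b + a * m + 1 = (b + 1) + a * m := by ring
    rw [h1, h2, hperk]
  have hmem_rep : ∀ c : ℕ, c % m + 1 ∈ Finset.Icc 1 m := by
    intro c
    have := Nat.mod_lt c hm0
    exact Finset.mem_Icc.mpr ⟨by omega, by omega⟩
  have hsurj := cycSurj n hn hV x y z hxy hzx hzy u w hu_mem hu_inj hw_mem hw_notC
  -- unpack hs
  have hsmem : s ∈ Finset.Icc 1 m ∧ s ∉ A ∧ s ∉ B := by
    have h1 : s ∈ (↑(Finset.Icc 1 m) : Set ℕ) \ (A ∪ B) := by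
      rw [hs]; exact rfl
    obtain ⟨h2, h3⟩ := h1
    rw [Finset.mem_coe] at h2
    exact ⟨h2, fun h => h3 (Or.inl h), fun h => h3 (Or.inr h)⟩
  obtain ⟨hsF, hsA, hsB⟩ := hsmem
  obtain ⟨hs1, hsm⟩ := Finset.mem_Icc.mp hsF
  have hcover0 : ∀ r, r ∈ Finset.Icc 1 m → r ≠ s → r ∈ A ∨ r ∈ B := by
    intro r hr hrs
    by_contra hc
    push_neg at hc
    have h1 : r ∈ (↑(Finset.Icc 1 m) : Set ℕ) \ (A ∪ B) := by
      refine ⟨Finset.mem_coe.mpr hr, ?_⟩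
      rintro (h | h)
      · exact hc.1 h
      · exact hc.2 h
    rw [hs] at h1
    exact hrs h1
  -- the insertion machine
  have hins : ∀ t ∈ Finset.Icc 1 m, ∀ p q : ℕ,
      (p = n - 3 ∧ q = n - 2 ∨ p = n - 2 ∧ q = n - 3) →
      (G p).Adj w (u t) → (G q).Adj w (u (t + 1)) → False := by
    intro t ht p q hpq h1 h2
    refine hnoham t ?_ (insertion n hn hV G x y z hxy hzx hzy u w hper hu_mem hu_inj
      hadj hw_mem hw_notC t ht p q hpq h1 h2)
    rw [Finset.mem_Icc] at ht ⊢
    omega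
  -- the two predicates
  set d := s - 1 with hddef
  have hd : d < m := by omega
  set P : ℕ → Prop := fun c => (G (n - 3)).Adj w (u (c % m + 1)) with hPdef
  set Q : ℕ → Prop := fun c => (G (n - 2)).Adj w (u (c % m + 1)) with hQdef
  have hPm : ∀ a b : ℕ, a % m = b % m → (P a ↔ P b) := by
    intro a b h; rw [hPdef]; simp only; rw [h]
  have hQm : ∀ a b : ℕ, a % m = b % m → (Q a ↔ Q b) := by
    intro a b h; rw [hQdef]; simp only; rw [h]
  -- membership translations
  have hAmem : ∀ r, r ∈ Finset.Icc 1 m → (r ∈ A ↔ P r) := by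
    intro r hr
    rw [hA]
    simp only [Set.mem_setOf_eq, hPdef]
    constructor
    · rintro ⟨-, h⟩; rwa [hu_red r] at h
    · intro h; exact ⟨hr, by rwa [← hu_red r] at h⟩
  have hBmem : ∀ r, r ∈ Finset.Icc 1 m → (r ∈ B ↔ Q (r - 1)) := by
    intro r hr
    rw [Finset.mem_Icc] at hr
    rw [hB]
    simp only [Set.mem_setOf_eq, hQdef]
    have he : u ((r - 1) % m + 1) = u r := by
      rw [← hu_red (r - 1), show r - 1 + 1 = r from by omega]
    rw [he]
    constructor
    · rintro ⟨-, h⟩; exact h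
    · intro h; exact ⟨Finset.mem_Icc.mpr (by omega), h⟩
  -- holes
  have hole1 : ¬ P (d + 1) := by
    intro h
    have : s ∈ A := (hAmem s hsF).mpr (by
      rwa [show d + 1 = s from by omega] at h)
    exact hsA this
  have hole2 : ¬ Q d := by
    intro h
    have : s ∈ B := (hBmem s hsF).mpr (by
      rwa [show s - 1 = d from rfl])
    exact hsB this
  -- cover
  have cover : ∀ c : ℕ, c % m ≠ d → P (c + 1) ∨ Q c := by
    intro c hc
    have hrF : c % m + 1 ∈ Finset.Icc 1 m := hmem_rep c
    have hrs : c % m + 1 ≠ s := by omega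
    rcases hcover0 _ hrF hrs with h | h
    · left
      have hP := (hAmem _ hrF).mp h
      refine (hPm (c % m + 1) (c + 1) (modSucc m c (by omega))).mp hP
    · right
      have hQ := (hBmem _ hrF).mp h
      rwa [show c % m + 1 - 1 = c % m from by omega,
        (by exact (hQm (c % m) c (Nat.mod_mod_of_dvd c dvd_rfl)) : Q (c % m) ↔ Q c)] at hQ
  -- disjointness and step via insertion
  have hdisj : ∀ c : ℕ, ¬ (Q c ∧ P (c + 1)) := by
    rintro c ⟨hQc, hPc⟩
    refine hins (c % m + 1) (hmem_rep c) (n - 2) (n - 3) (Or.inr ⟨rfl, rfl⟩) hQc ?_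
    have h2 : u (c % m + 1 + 1) = u ((c + 1) % m + 1) := by
      rw [hu_red (c % m + 1), modSucc m c (by omega)]
    rw [h2]
    exact (hPm (c + 1) ((c + 1)) rfl).mp hPc
  have hstep : ∀ c : ℕ, ¬ (P c ∧ Q (c + 1)) := by
    rintro c ⟨hPc, hQc⟩
    refine hins (c % m + 1) (hmem_rep c) (n - 3) (n - 2) (Or.inl ⟨rfl, rfl⟩) hPc ?_
    have h2 : u (c % m + 1 + 1) = u ((c + 1) % m + 1) := by
      rw [hu_red (c % m + 1), modSucc m c (by omega)]
    rw [h2]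
    exact hQc
  -- degree bounds
  have hxyzcard : ({x, y, z} : Finset V).card ≤ 3 := by
    apply le_trans (Finset.card_insert_le _ _)
    have := Finset.card_insert_le y ({z} : Finset V)
    simp at this ⊢
    omega
  have hbridge : ∀ a : V, a ∈ (({x, y, z} : Set V)ᶜ) ↔ a ∉ ({x, y, z} : Finset V) := by
    intro a
    simp [Set.mem_compl_iff]
  have hncard : ∀ i : ℕ, ((G i).neighborSet w).ncard = ((G i).neighborFinset w).card := by
    intro i
    rw [Set.ncard_eq_toFinset_card', SimpleGraph.neighborFinset_def]
  have degP : m - 1 ≤ 2 * ((Finset.range m).filter (fun c => P (c + 1))).card := by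
    have hdg := hdeg (n - 3) (by rw [Finset.mem_Icc]; omega) w
    rw [hncard] at hdg
    have hsub : (G (n - 3)).neighborFinset w ⊆ ({x, y, z} : Finset V) ∪
        ((Finset.range m).filter (fun c => P (c + 1))).image
          (fun c => u ((c + 1) % m + 1)) := by
      intro v hv
      rw [SimpleGraph.mem_neighborFinset] at hv
      by_cases hvx : v ∈ ({x, y, z} : Finset V)
      · exact Finset.mem_union_left _ hvx
      · refine Finset.mem_union_right _ ?_
        have hvS : v ∈ (({x, y, z} : Set V)ᶜ) := (hbridge v).mpr hvx
        rcases hsurj v hvS with rfl | ⟨r, hr, rfl⟩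
        · exact absurd hv (SimpleGraph.irrefl _)
        · rw [Finset.mem_image]
          obtain ⟨hr1, hrm⟩ := Finset.mem_Icc.mp hr
          have e : ((r + m - 2) % m + 1) % m + 1 = (r - 1) % m + 1 := by
            rw [modSucc m _ (by omega), show r + m - 2 + 1 = (r - 1) + m from by omega,
              Nat.add_mod_right]
          have e2 : u (((r + m - 2) % m + 1) % m + 1) = u r := by
            rw [e, ← hu_red (r - 1), show r - 1 + 1 = r from by omega]
          refine ⟨(r + m - 2) % m, Finset.mem_filter.mpr
            ⟨Finset.mem_range.mpr (Nat.mod_lt _ hm0), ?_⟩, e2⟩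
          show (G (n - 3)).Adj w (u (((r + m - 2) % m + 1) % m + 1))
          rw [e2]
          exact hv
    have h1 := Finset.card_le_card hsub
    have h2 := Finset.card_union_le ({x, y, z} : Finset V)
      (((Finset.range m).filter (fun c => P (c + 1))).image (fun c => u ((c + 1) % m + 1)))
    have h3 := Finset.card_image_le (s := (Finset.range m).filter (fun c => P (c + 1)))
      (f := fun c => u ((c + 1) % m + 1))
    omega
  have degQ : m - 1 ≤ 2 * ((Finset.range m).filter (fun c => Q c)).card := by
    have hdg := hdeg (n - 2) (by rw [Finset.mem_Icc]; omega) w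
    rw [hncard] at hdg
    have hsub : (G (n - 2)).neighborFinset w ⊆ ({x, y, z} : Finset V) ∪
        ((Finset.range m).filter (fun c => Q c)).image (fun c => u (c % m + 1)) := by
      intro v hv
      rw [SimpleGraph.mem_neighborFinset] at hv
      by_cases hvx : v ∈ ({x, y, z} : Finset V)
      · exact Finset.mem_union_left _ hvx
      · refine Finset.mem_union_right _ ?_
        have hvS : v ∈ (({x, y, z} : Set V)ᶜ) := (hbridge v).mpr hvx
        rcases hsurj v hvS with rfl | ⟨r, hr, rfl⟩
        · exact absurd hv (SimpleGraph.irrefl _)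
        · rw [Finset.mem_image]
          obtain ⟨hr1, hrm⟩ := Finset.mem_Icc.mp hr
          have e2 : u ((r - 1) % m % m + 1) = u r := by
            rw [Nat.mod_mod_of_dvd _ dvd_rfl, ← hu_red (r - 1),
              show r - 1 + 1 = r from by omega]
          refine ⟨(r - 1) % m, Finset.mem_filter.mpr
            ⟨Finset.mem_range.mpr (Nat.mod_lt _ hm0), ?_⟩, e2⟩
          show (G (n - 2)).Adj w (u ((r - 1) % m % m + 1))
          rw [e2]
          exact hv
    have h1 := Finset.card_le_card hsub
    have h2 := Finset.card_union_le ({x, y, z} : Finset V)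
      (((Finset.range m).filter (fun c => Q c)).image (fun c => u (c % m + 1)))
    have h3 := Finset.card_image_le (s := (Finset.range m).filter (fun c => Q c))
      (f := fun c => u (c % m + 1))
    omega
  obtain ⟨hQres, hPres⟩ := core m K d hmK hK hd P Q hPm hQm hole1 hole2 cover hdisj
    hstep degP degQ
  constructor
  · -- (if s = 1 then m else s - 1) ∈ B
    have hrF : (if s = 1 then m else s - 1) ∈ Finset.Icc 1 m := by
      split <;> (rw [Finset.mem_Icc]; omega)
    rw [hBmem _ hrF]
    have he : (if s = 1 then m else s - 1) - 1 = (d + m - 1) % m := by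
      by_cases h1 : s = 1
      · rw [if_pos h1]
        rw [show d + m - 1 = m - 1 from by omega, Nat.mod_eq_of_lt (by omega)]
      · rw [if_neg h1]
        rw [show d + m - 1 = (d - 1) + m from by omega, Nat.add_mod_right,
          Nat.mod_eq_of_lt (by omega)]
    rw [he]
    exact (hQm _ _ (Nat.mod_mod_of_dvd _ dvd_rfl)).mpr
      ((hQm _ _ rfl).mp (by rwa [show d + m - 1 = d + m - 1 from rfl] at hQres))
  · -- s % m + 1 ∈ A
    have hrF : s % m + 1 ∈ Finset.Icc 1 m := hmem_rep s
    rw [hAmem _ hrF]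
    refine (hPm (s % m + 1) (d + 2) ?_).mpr hPres
    rw [modSucc m s (by omega), show s + 1 = d + 2 from by omega]
end
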